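/- Let G be a connected undirected graph in which every vertex has degree ≥ 2 and some vertex has degree ≥ 3. Then every edge e of G is connected to its conjugate \bar{e} via an admissible path. -/

import Mathlib

/-- Edge `e` is connected to edge `g` by an admissible path: there is a list of
edges beginning with `e` and ending with `g` in which consecutive edges satisfy
`τ a = σ b` and `b ≠ bar a`. -/
def AdmConn {E V : Type*} (σ τ : E → V) (bar : E → E) (e g : E) : Prop :=
  ∃ p : List E, p.head? = some e ∧ p.getLast? = some g ∧
    p.Chain' (fun a b => τ a = σ b ∧ b ≠ bar a)

/-!
Let `S` be the set of edges admissibly reachable from `e`, and suppose `bar e ∉ S`. Call `f ∈ S`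
one-way if `bar f ∉ S`. A one-way `f` is the only edge of `S` ending at `τ f`, because from any
other one `bar f` is an admissible next step. Hence the successors of a one-way edge are one-way,
and distinct one-way edges have disjoint successor sets. These sets are nonempty since every degree
is at least `2`, so counting shows that each is a singleton and that together they cover all
one-way edges: every one-way edge ends at a vertex of degree `2` and has a one-way predecessor.
The endpoints of one-way edges are therefore closed under adjacency, so by connectivity they form
all of `V`, contradicting the vertex of degree at least `3`.
-/

open Finset

theorem Finset.card_eq_one_and_biUnion_eq_of_pairwiseDisjoint {ι α : Type*} [DecidableEq α]
    {I : Finset ι} {s : Finset α} {F : ι → Finset α} (hcard : #s ≤ #I)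
    (hne : ∀ i ∈ I, (F i).Nonempty) (hdisj : (I : Set ι).PairwiseDisjoint F)
    (hsub : I.biUnion F ⊆ s) :
    (∀ i ∈ I, #(F i) = 1) ∧ I.biUnion F = s := by
  have hle : ∀ i ∈ I, 1 ≤ #(F i) := fun i hi => (hne i hi).card_pos
  have hsum : ∑ i ∈ I, #(F i) ≤ ∑ _i ∈ I, 1 := calc
    ∑ i ∈ I, #(F i) = #(I.biUnion F) := (card_biUnion hdisj).symm
    _ ≤ #s := card_le_card hsub
    _ ≤ ∑ _i ∈ I, 1 := by simpa using hcard
  have heq : ∑ _i ∈ I, 1 = ∑ i ∈ I, #(F i) := le_antisymm (sum_le_sum hle) hsum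
  refine ⟨fun i hi => ((sum_eq_sum_iff_of_le hle).mp heq i hi).symm, ?_⟩
  refine eq_of_subset_of_card_le hsub ?_
  rw [card_biUnion hdisj, ← heq]
  simpa using hcard

section AdmStep

variable {E V : Type*} {σ τ : E → V} {bar : E → E}

def AdmStep (σ τ : E → V) (bar : E → E) (a b : E) : Prop := τ a = σ b ∧ b ≠ bar a

instance [DecidableEq E] [DecidableEq V] : DecidableRel (AdmStep σ τ bar) :=
  fun _ _ => inferInstanceAs (Decidable (_ ∧ _))

theorem admConn_of_reflTransGen {e g : E} (h : Relation.ReflTransGen (AdmStep σ τ bar) e g) :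
    AdmConn σ τ bar e g := by
  obtain ⟨l, hchain, hlast⟩ := List.exists_isChain_cons_of_relationReflTransGen h
  refine ⟨e :: l, rfl, ?_, hchain⟩
  rw [List.getLast?_eq_some_getLast (List.cons_ne_nil _ _), hlast]

theorem eq_of_tau_eq_of_bar_notMem {S : Set E}
    (hS : ∀ a b, a ∈ S → AdmStep σ τ bar a b → b ∈ S)
    (hinv : ∀ e, bar (bar e) = e) (hbar : ∀ e, τ (bar e) = σ e) {f g : E} (hbf : bar f ∉ S)
    (hg : g ∈ S) (hgf : τ g = τ f) : g = f := by
  by_contra hgf'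
  refine hbf (hS g (bar f) hg ⟨?_, fun h => hgf' ?_⟩)
  · rw [hgf, ← hbar (bar f), hinv]
  · rw [← hinv g, ← h, hinv]

theorem AdmStep.mem_and_bar_notMem {S : Set E}
    (hS : ∀ a b, a ∈ S → AdmStep σ τ bar a b → b ∈ S)
    (hinv : ∀ e, bar (bar e) = e) (hbar : ∀ e, τ (bar e) = σ e) {f g : E} (hf : f ∈ S)
    (hbf : bar f ∉ S) (hfg : AdmStep σ τ bar f g) : g ∈ S ∧ bar g ∉ S := by
  refine ⟨hS f g hf hfg, fun hbg => hfg.2 ?_⟩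
  rw [← eq_of_tau_eq_of_bar_notMem hS hinv hbar hbf hbg (by rw [hbar, hfg.1]), hinv]

theorem AdmStep.eq_of_bar_notMem {S : Set E}
    (hS : ∀ a b, a ∈ S → AdmStep σ τ bar a b → b ∈ S)
    (hinv : ∀ e, bar (bar e) = e) (hbar : ∀ e, τ (bar e) = σ e) {f f' g : E} (hf : f ∈ S)
    (hbf' : bar f' ∉ S) (hfg : AdmStep σ τ bar f g) (hf'g : AdmStep σ τ bar f' g) : f = f' :=
  eq_of_tau_eq_of_bar_notMem hS hinv hbar hbf' hf (hfg.1.trans hf'g.1.symm)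

theorem card_filter_admStep [Fintype E] [DecidableEq E] [DecidableEq V]
    (hinv : ∀ e, bar (bar e) = e) (hbar : ∀ e, τ (bar e) = σ e) (f : E) :
    #{g | AdmStep σ τ bar f g} = #{g | τ g = τ f} - 1 := by
  rw [← card_erase_of_mem (s := {g | τ g = τ f}) (mem_filter.2 ⟨mem_univ f, rfl⟩)]
  refine card_equiv (Function.Involutive.toPerm bar hinv) fun g => ?_
  simp only [mem_filter, mem_univ, true_and, mem_erase]
  change τ f = σ g ∧ g ≠ bar f ↔ bar g ≠ f ∧ τ (bar g) = τ f
  rw [hbar]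
  constructor
  · rintro ⟨h, hg⟩
    exact ⟨fun h' => hg (by rw [← h', hinv]), h.symm⟩
  · rintro ⟨hg, h⟩
    exact ⟨h.symm, fun h' => hg (by rw [h', hinv])⟩

theorem exists_tau_eq_of_closed (hbar : ∀ e, τ (bar e) = σ e)
    (hconn : ∀ u v : V, Relation.ReflTransGen (fun a b => ∃ e, σ e = a ∧ τ e = b) u v)
    {T : Set E} (hpred : ∀ g ∈ T, ∃ f ∈ T, τ f = σ g)
    (hsucc : ∀ f ∈ T, ∀ g, AdmStep σ τ bar f g → g ∈ T) {e : E} (he : e ∈ T) (v : V) :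
    ∃ f ∈ T, τ f = v := by
  induction hconn (τ e) v with
  | refl => exact ⟨e, he, rfl⟩
  | tail _ hstep ih =>
    obtain ⟨g, rfl, rfl⟩ := hstep
    obtain ⟨f, hf, hfg⟩ := ih
    by_cases hg : g = bar f
    · obtain ⟨f', hf', h⟩ := hpred f hf
      exact ⟨f', hf', by rw [hg, hbar, h]⟩
    · exact ⟨g, hsucc f hf g ⟨hfg, hg⟩, rfl⟩

theorem bar_mem_of_admStep_closed [Fintype E] [DecidableEq V]
    (hinv : ∀ e, bar (bar e) = e) (hbar : ∀ e, τ (bar e) = σ e)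
    (hconn : ∀ u v : V, Relation.ReflTransGen (fun a b => ∃ e, σ e = a ∧ τ e = b) u v)
    (hdeg2 : ∀ v : V, 2 ≤ #{f | τ f = v}) (hdeg3 : ∃ v : V, 3 ≤ #{f | τ f = v})
    {S : Set E} (hS : ∀ a b, a ∈ S → AdmStep σ τ bar a b → b ∈ S) {e : E} (he : e ∈ S) :
    bar e ∈ S := by
  classical
  by_contra hbe
  set T : Finset E := {f | f ∈ S ∧ bar f ∉ S} with hT
  have hmemT : ∀ {f}, f ∈ T ↔ f ∈ S ∧ bar f ∉ S := by simp [hT]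
  set succ : E → Finset E := fun f => {g | AdmStep σ τ bar f g}
  have hsucc : ∀ f ∈ T, ∀ g, AdmStep σ τ bar f g → g ∈ T := fun f hf g hfg =>
    hmemT.2 (hfg.mem_and_bar_notMem hS hinv hbar (hmemT.1 hf).1 (hmemT.1 hf).2)
  have hdisj : (T : Set E).PairwiseDisjoint succ := fun f hf f' hf' hff' =>
    disjoint_left.2 fun g hg hg' => hff' <| AdmStep.eq_of_bar_notMem hS hinv hbar
      (hmemT.1 hf).1 (hmemT.1 hf').2 (mem_filter.1 hg).2 (mem_filter.1 hg').2
  have hcard : ∀ f, #(succ f) = #{g | τ g = τ f} - 1 := card_filter_admStep hinv hbar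
  obtain ⟨hone, hcover⟩ := card_eq_one_and_biUnion_eq_of_pairwiseDisjoint le_rfl
    (fun f _ => card_pos.1 (by have := hdeg2 (τ f); have := hcard f; omega)) hdisj
    (biUnion_subset.2 fun f hf g hg => hsucc f hf g (mem_filter.1 hg).2)
  have hpred : ∀ g ∈ T, ∃ f ∈ T, τ f = σ g := fun g hg => by
    obtain ⟨f, hf, hfg⟩ := mem_biUnion.1 (hcover ▸ hg)
    exact ⟨f, hf, (mem_filter.1 hfg).2.1⟩
  obtain ⟨w, hw⟩ := hdeg3
  obtain ⟨f, hf, rfl⟩ := exists_tau_eq_of_closed (T := T) hbar hconn hpred hsucc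
    (hmemT.2 ⟨he, hbe⟩) w
  have := hone f hf
  have := hcard f
  omega

end AdmStep

theorem edge_admissibly_connected_to_conjugate_general
    {E V : Type*} [Fintype E] [DecidableEq V] (σ τ : E → V) (bar : E → E)
    (hinv : ∀ e, bar (bar e) = e)
    (hbar : ∀ e, τ (bar e) = σ e)
    (hconn : ∀ u v : V, Relation.ReflTransGen (fun a b => ∃ e, σ e = a ∧ τ e = b) u v)
    (hdeg2 : ∀ v : V, 2 ≤ (Finset.univ.filter fun f => τ f = v).card)
    (hdeg3 : ∃ v : V, 3 ≤ (Finset.univ.filter fun f => τ f = v).card)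
    (e : E) :
    AdmConn σ τ bar e (bar e) :=
  admConn_of_reflTransGen <| bar_mem_of_admStep_closed hinv hbar hconn hdeg2 hdeg3
    (S := {f | Relation.ReflTransGen (AdmStep σ τ bar) e f}) (fun _ _ ha hab => ha.tail hab) .refl

/-- Let `G` be a connected undirected graph in which every vertex
has degree ≥ 2 and some vertex has degree ≥ 3.  Then every edge `e` of `G` is
connected to its conjugate `bar e` via an admissible path. -/
theorem edge_admissibly_connected_to_conjugate
    {E V : Type*} [Fintype E] [DecidableEq V] (σ τ : E → V) (bar : E → E)
    (hinv : ∀ e, bar (bar e) = e) (hne : ∀ e, bar e ≠ e)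
    (hbar : ∀ e, τ (bar e) = σ e)
    (hconn : ∀ u v : V, Relation.ReflTransGen (fun a b => ∃ e, σ e = a ∧ τ e = b) u v)
    (hdeg2 : ∀ v : V, 2 ≤ (Finset.univ.filter fun f => τ f = v).card)
    (hdeg3 : ∃ v : V, 3 ≤ (Finset.univ.filter fun f => τ f = v).card)
    (e : E) :
    AdmConn σ τ bar e (bar e) :=
  edge_admissibly_connected_to_conjugate_general σ τ bar hinv hbar hconn hdeg2 hdeg3 e
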